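/- arXiv:2308.14716 — 5 statements merged into one kernel-verified Lean document; each statement's English description precedes it below -/
import Mathlib

section
/- Let v > 0 and let g: V→ℝ satisfy VS_g(x,y) ≤ v for all x,y ∈ V. Then there are no vertices a,b,c ∈ V such that (a,b) and (b,c) are both edges of the (2v/3)-violation graph B_{2v/3,g}. -/
/-- The violation score of a pair `(x, y)` with respect to `g`:
`|g x - g y| - dist_G x y` if this is positive, and `0` otherwise. -/
noncomputable def violationScore {V : Type*} (G : SimpleGraph V) (g : V → ℝ) (x y : V) : ℝ :=
  max (|g x - g y| - (G.dist x y : ℝ)) 0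

/-- If all violation scores of `g` are bounded by `v`, then no two consecutive edges
`(a,b)` and `(b,c)` can both be edges of the `(2v/3)`-violation graph `B_{2v/3, g}`. -/
theorem no_consecutive_edges_in_violation_graph {V : Type*} [Fintype V]
    (G : SimpleGraph V) (hG : G.Connected) (g : V → ℝ) (v : ℝ) (hv : 0 < v)
    (hbound : ∀ x y : V, violationScore G g x y ≤ v) :
    ¬ ∃ a b c : V,
      (violationScore G g a b > 2 * v / 3 ∧ g a < g b) ∧
      (violationScore G g b c > 2 * v / 3 ∧ g b < g c) := by
  rintro ⟨a, b, c, ⟨hab, gab⟩, ⟨hbc, gbc⟩⟩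
  have hab' : |g a - g b| - (G.dist a b : ℝ) > 2 * v / 3 := by
    rcases max_cases (|g a - g b| - (G.dist a b : ℝ)) 0 with ⟨h1,h2⟩|⟨h1,h2⟩ <;>
      unfold violationScore at hab <;> linarith
  have hbc' : |g b - g c| - (G.dist b c : ℝ) > 2 * v / 3 := by
    rcases max_cases (|g b - g c| - (G.dist b c : ℝ)) 0 with ⟨h1,h2⟩|⟨h1,h2⟩ <;>
      unfold violationScore at hbc <;> linarith
  have e1 : |g a - g b| = g b - g a := by rw [abs_sub_comm]; exact abs_of_pos (by linarith)
  have e2 : |g b - g c| = g c - g b := by rw [abs_sub_comm]; exact abs_of_pos (by linarith)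
  have htri : (G.dist a c : ℝ) ≤ (G.dist a b : ℝ) + (G.dist b c : ℝ) := by
    exact_mod_cast hG.dist_triangle (v := b)
  have hac := hbound a c
  have e3 : |g a - g c| = g c - g a := by rw [abs_sub_comm]; exact abs_of_pos (by linarith)
  have : violationScore G g a c ≥ |g a - g c| - (G.dist a c : ℝ) := le_max_left _ _
  rw [e3] at this
  rw [e1] at hab'
  rw [e2] at hbc'
  linarith
end

section
/- Let v > 0 and let g: V→[0,r] be a function such that VS_g(x,y) ≤ v for all x,y ∈ V. Let M be a maximal matching of B_{2v/3,g}, i.e., a set of edges of B_{2v/3,g} that pairwise share no vertices and such that every edge of B_{2v/3,g} shares a vertex with some edge of M (so g(x) < g(y) for every (x,y) ∈ M). Define h: V→ℝ by h(x) = g(x) + v/3 and h(y) = g(y) − v/3 for every edge (x,y) ∈ M, and h(z) = g(z) for all other vertices z. Then VS_h(x,y) ≤ 2v/3 for all x,y ∈ V. -/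
/-- `(x,y)` is an edge of the `τ`-violation graph `B_{τ,g}`. -/
noncomputable def violEdge {V : Type*} (G : SimpleGraph V) (g : V → ℝ) (τ : ℝ) (x y : V) : Prop :=
  violationScore G g x y > τ ∧ g x < g y

/-- Violation score reduction: modifying `g` along a maximal matching `M` of `B_{2v/3,g}`
(increasing the smaller endpoint by `v/3` and decreasing the larger by `v/3`) yields a
function `h` with all violation scores at most `2v/3`. -/
theorem violation_score_reduction {V : Type*} [Fintype V]
    (G : SimpleGraph V) (hG : G.Connected) (r v : ℝ) (hv : 0 < v)
    (g : V → ℝ) (hg : ∀ x, g x ∈ Set.Icc (0 : ℝ) r)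
    (hbound : ∀ x y : V, violationScore G g x y ≤ v)
    (M : Set (V × V))
    (hMedge : ∀ p ∈ M, violEdge G g (2 * v / 3) p.1 p.2)
    (hMdisj : ∀ p ∈ M, ∀ q ∈ M, p ≠ q →
      p.1 ≠ q.1 ∧ p.1 ≠ q.2 ∧ p.2 ≠ q.1 ∧ p.2 ≠ q.2)
    (hMmax : ∀ x y : V, violEdge G g (2 * v / 3) x y →
      ∃ p ∈ M, x = p.1 ∨ x = p.2 ∨ y = p.1 ∨ y = p.2)
    (h : V → ℝ)
    (hhM : ∀ p ∈ M, h p.1 = g p.1 + v / 3 ∧ h p.2 = g p.2 - v / 3)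
    (hhrest : ∀ z : V, (∀ p ∈ M, z ≠ p.1 ∧ z ≠ p.2) → h z = g z) :
    ∀ x y : V, violationScore G h x y ≤ 2 * v / 3 := by
  -- Lipschitz-type bound from `hbound`
  have hLip : ∀ a b : V, g a - g b ≤ (G.dist a b : ℝ) + v := by
    intro a b
    have h1 : |g a - g b| - (G.dist a b : ℝ) ≤ v :=
      le_trans (le_max_left _ _) (hbound a b)
    have h2 := le_abs_self (g a - g b)
    linarith
  -- triangle inequality for graph distance (cast to ℝ)
  have htri : ∀ a b c : V, (G.dist a c : ℝ) ≤ (G.dist a b : ℝ) + (G.dist b c : ℝ) := by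
    intro a b c
    exact_mod_cast hG.dist_triangle (u := a) (v := b) (w := c)
  have hcomm : ∀ a b : V, (G.dist a b : ℝ) = (G.dist b a : ℝ) := by
    intro a b; rw [SimpleGraph.dist_comm]
  have hdnn : ∀ a b : V, (0 : ℝ) ≤ (G.dist a b : ℝ) := fun a b => Nat.cast_nonneg _
  -- every matching edge is strongly violated
  have hedge : ∀ p ∈ M, g p.2 - g p.1 > (G.dist p.1 p.2 : ℝ) + 2 * v / 3 := by
    intro p hp
    obtain ⟨hvs, hlt⟩ := hMedge p hp
    have habs : |g p.1 - g p.2| = g p.2 - g p.1 := by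
      rw [abs_sub_comm]; exact abs_of_pos (by linarith)
    have : |g p.1 - g p.2| - (G.dist p.1 p.2 : ℝ) > 2 * v / 3 := by
      rcases (lt_max_iff.mp hvs) with h1 | h1
      · exact h1
      · linarith
    linarith
  -- if x is a lower endpoint of a matching edge, g x - g y ≤ dist + v/3
  have hlow : ∀ p ∈ M, ∀ y : V, g p.1 - g y ≤ (G.dist p.1 y : ℝ) + v / 3 := by
    intro p hp y
    have h1 := hedge p hp
    have h2 := hLip p.2 y
    have h3 := htri p.2 p.1 y
    have h4 := hcomm p.2 p.1
    linarith
  -- if y is an upper endpoint of a matching edge, g x - g y ≤ dist + v/3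
  have hup : ∀ q ∈ M, ∀ x : V, g x - g q.2 ≤ (G.dist x q.2 : ℝ) + v / 3 := by
    intro q hq x
    have h1 := hedge q hq
    have h2 := hLip x q.1
    have h3 := htri x q.2 q.1
    have h4 := hcomm q.2 q.1
    linarith
  -- lower endpoint of p vs upper endpoint of a different edge q
  have hlowup : ∀ p ∈ M, ∀ q ∈ M, g p.1 - g q.2 ≤ (G.dist p.1 q.2 : ℝ) - v / 3 ∨
      (p = q) := by
    intro p hp q hq
    by_cases hpq : p = q
    · exact Or.inr hpq
    · left
      have h1 := hedge p hp
      have h2 := hedge q hq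
      have h3 := hLip p.2 q.1
      have h4 := htri p.2 p.1 q.1
      have h5 := htri p.1 q.2 q.1
      have h6 := hcomm p.2 p.1
      have h7 := hcomm q.2 q.1
      linarith
  -- key one-sided claim
  have key : ∀ x y : V, h x - h y ≤ (G.dist x y : ℝ) + 2 * v / 3 := by
    intro x y
    rcases Classical.em (∃ p ∈ M, x = p.1) with ⟨p, hp, hxp⟩ | hxl
    · -- x is a lower endpoint; h x = g x + v/3
      have hx : h x = g x + v / 3 := by rw [hxp]; exact (hhM p hp).1
      rcases Classical.em (∃ q ∈ M, y = q.1) with ⟨q, hq, hyq⟩ | hyl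
      · have hy : h y = g y + v / 3 := by rw [hyq]; exact (hhM q hq).1
        have := hlow p hp y
        rw [← hxp] at this
        linarith
      rcases Classical.em (∃ q ∈ M, y = q.2) with ⟨q, hq, hyq⟩ | hyu
      · have hy : h y = g y - v / 3 := by rw [hyq]; exact (hhM q hq).2
        rcases hlowup p hp q hq with hcase | hcase
        · rw [← hxp, ← hyq] at hcase
          linarith
        · -- p = q : (x,y) is itself a matching edge
          subst hcase
          have := hedge p hp
          rw [← hxp, ← hyq] at this
          have := hdnn x y
          linarith
      · have hy : h y = g y := hhrest y (by
          intro q hq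
          exact ⟨fun hc => hyl ⟨q, hq, hc⟩, fun hc => hyu ⟨q, hq, hc⟩⟩)
        have := hlow p hp y
        rw [← hxp] at this
        linarith
    rcases Classical.em (∃ p ∈ M, x = p.2) with ⟨p, hp, hxp⟩ | hxu
    · -- x is an upper endpoint; h x = g x - v/3
      have hx : h x = g x - v / 3 := by rw [hxp]; exact (hhM p hp).2
      rcases Classical.em (∃ q ∈ M, y = q.1) with ⟨q, hq, hyq⟩ | hyl
      · have hy : h y = g y + v / 3 := by rw [hyq]; exact (hhM q hq).1
        have := hLip x y
        linarith
      rcases Classical.em (∃ q ∈ M, y = q.2) with ⟨q, hq, hyq⟩ | hyu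
      · have hy : h y = g y - v / 3 := by rw [hyq]; exact (hhM q hq).2
        have := hup q hq x
        rw [← hyq] at this
        linarith
      · have hy : h y = g y := hhrest y (by
          intro q hq
          exact ⟨fun hc => hyl ⟨q, hq, hc⟩, fun hc => hyu ⟨q, hq, hc⟩⟩)
        have := hLip x y
        linarith
    · -- x unmatched; h x = g x
      have hx : h x = g x := hhrest x (by
        intro p hp
        exact ⟨fun hc => hxl ⟨p, hp, hc⟩, fun hc => hxu ⟨p, hp, hc⟩⟩)
      rcases Classical.em (∃ q ∈ M, y = q.1) with ⟨q, hq, hyq⟩ | hyl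
      · have hy : h y = g y + v / 3 := by rw [hyq]; exact (hhM q hq).1
        have := hLip x y
        linarith
      rcases Classical.em (∃ q ∈ M, y = q.2) with ⟨q, hq, hyq⟩ | hyu
      · have hy : h y = g y - v / 3 := by rw [hyq]; exact (hhM q hq).2
        have := hup q hq x
        rw [← hyq] at this
        linarith
      · have hy : h y = g y := hhrest y (by
          intro q hq
          exact ⟨fun hc => hyl ⟨q, hq, hc⟩, fun hc => hyu ⟨q, hq, hc⟩⟩)
        -- both unmatched: use maximality
        by_contra hcon
        push_neg at hcon
        rw [hx, hy] at hcon
        have hve : violEdge G g (2 * v / 3) y x := by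
          constructor
          · have habs : |g y - g x| = g x - g y := by
              rw [abs_sub_comm]
              exact abs_of_pos (by have := hdnn x y; linarith)
            have : |g y - g x| - (G.dist y x : ℝ) > 2 * v / 3 := by
              rw [habs, ← hcomm x y]; linarith
            exact lt_max_iff.mpr (Or.inl this)
          · have := hdnn x y; linarith
        obtain ⟨p, hp, hcases⟩ := hMmax y x hve
        rcases hcases with hc | hc | hc | hc
        · exact hyl ⟨p, hp, hc⟩
        · exact hyu ⟨p, hp, hc⟩
        · exact hxl ⟨p, hp, hc⟩
        · exact hxu ⟨p, hp, hc⟩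
  -- conclude
  intro x y
  apply max_le _ (by linarith)
  have h1 := key x y
  have h2 := key y x
  rw [← hcomm x y] at h2
  have : |h x - h y| ≤ (G.dist x y : ℝ) + 2 * v / 3 :=
    abs_sub_le_iff.mpr ⟨by linarith, by linarith⟩
  linarith
end

section
/- Let r > 0, f: V→[0,r], and let (g_t)_{t≥1} be any sequence of functions with g_1 = f such that for each t ≥ 1, g_{t+1} is obtained from g_t by a v_t-reduction step with v_t = r·(2/3)^{t−1}. Then for all t ≥ 1 and all x,y ∈ V, VS_{g_t}(x,y) ≤ r·(2/3)^{t−1}; consequently, |g_t(x)−g_t(y)| ≤ (1 + r·(2/3)^{t−1})·dist_G(x,y) for all x,y ∈ V, i.e., g_t is (1 + r·(2/3)^{t−1})-Lipschitz. -/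
/-- `h` is obtained from `g` by a `v`-reduction step: there is a maximal matching `M` of
`B_{2v/3, g}` such that `h x = g x + v/3` and `h y = g y - v/3` for every `(x,y) ∈ M`,
and `h z = g z` for all other vertices `z`. -/
noncomputable def ReductionStep {V : Type*} (G : SimpleGraph V) (v : ℝ) (g h : V → ℝ) : Prop :=
  ∃ M : Set (V × V),
    (∀ p ∈ M, violEdge G g (2 * v / 3) p.1 p.2) ∧
    (∀ p ∈ M, ∀ q ∈ M, p ≠ q → p.1 ≠ q.1 ∧ p.1 ≠ q.2 ∧ p.2 ≠ q.1 ∧ p.2 ≠ q.2) ∧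
    (∀ x y : V, violEdge G g (2 * v / 3) x y →
      ∃ p ∈ M, x = p.1 ∨ x = p.2 ∨ y = p.1 ∨ y = p.2) ∧
    (∀ p ∈ M, h p.1 = g p.1 + v / 3 ∧ h p.2 = g p.2 - v / 3) ∧
    (∀ z : V, (∀ p ∈ M, z ≠ p.1 ∧ z ≠ p.2) → h z = g z)

private lemma key_step {V : Type*} (G : SimpleGraph V) (hG : G.Connected) {v : ℝ} (hv : 0 < v)
    {g h : V → ℝ} (hVS : ∀ x y : V, g y - g x ≤ (G.dist x y : ℝ) + v)
    (hstep : ReductionStep G v g h) :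
    ∀ x y : V, h y - h x ≤ (G.dist x y : ℝ) + 2 * v / 3 := by
  obtain ⟨M, hM1, _hM2, hM3, hM4, hM5⟩ := hstep
  -- extract violation info from an edge of the violation graph
  have hviol : ∀ p ∈ M, g p.2 - g p.1 > (G.dist p.1 p.2 : ℝ) + 2 * v / 3 := by
    intro p hp
    obtain ⟨hvs, hlt⟩ := hM1 p hp
    have habs : |g p.1 - g p.2| = g p.2 - g p.1 := by
      rw [abs_sub_comm]; exact abs_of_pos (by linarith)
    unfold violationScore at hvs
    rw [habs] at hvs
    rcases max_cases (g p.2 - g p.1 - (G.dist p.1 p.2 : ℝ)) 0 with ⟨he, _⟩ | ⟨he, _⟩ <;>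
      rw [he] at hvs <;> linarith
  have dtri : ∀ a b c : V, (G.dist a c : ℝ) ≤ (G.dist a b : ℝ) + (G.dist b c : ℝ) := by
    intro a b c; exact_mod_cast hG.dist_triangle
  intro x y
  have hdnn : (0 : ℝ) ≤ (G.dist x y : ℝ) := Nat.cast_nonneg _
  -- h bounds for unmatched-in-direction vertices
  have hx_ge : (¬ ∃ p ∈ M, x = p.2) → g x ≤ h x := by
    intro hns
    by_cases hsr : ∃ p ∈ M, x = p.1
    · obtain ⟨p, hp, hxe⟩ := hsr
      have := (hM4 p hp).1
      rw [← hxe] at this; rw [this]; linarith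
    · have : h x = g x := by
        apply hM5; intro p hp
        exact ⟨fun he => hsr ⟨p, hp, he⟩, fun he => hns ⟨p, hp, he⟩⟩
      linarith
  have hy_le : (¬ ∃ p ∈ M, y = p.1) → h y ≤ g y := by
    intro hns
    by_cases hsk : ∃ p ∈ M, y = p.2
    · obtain ⟨p, hp, hye⟩ := hsk
      have := (hM4 p hp).2
      rw [← hye] at this; rw [this]; linarith
    · have : h y = g y := by
        apply hM5; intro p hp
        exact ⟨fun he => hns ⟨p, hp, he⟩, fun he => hsk ⟨p, hp, he⟩⟩
      linarith
  by_cases hy : ∃ p ∈ M, y = p.1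
  · obtain ⟨q, hq, hye⟩ := hy
    have hyval : h y = g y + v / 3 := by have := (hM4 q hq).1; rw [← hye] at this; exact this
    have hqv : g q.2 - g y > (G.dist y q.2 : ℝ) + 2 * v / 3 := by
      have := hviol q hq; rw [← hye] at this; exact this
    -- g y - g x < dist x y + v/3
    have hgap : g y - g x < (G.dist x y : ℝ) + v / 3 := by
      have h1 := hVS x q.2
      have h2 := dtri x y q.2
      linarith
    by_cases hx : ∃ p ∈ M, x = p.2
    · -- both matched: use both violations
      obtain ⟨p, hp, hxe⟩ := hx
      have hxval : h x = g x - v / 3 := by have := (hM4 p hp).2; rw [← hxe] at this; exact this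
      have hpv : g x - g p.1 > (G.dist p.1 x : ℝ) + 2 * v / 3 := by
        have := hviol p hp; rw [← hxe] at this; exact this
      have h1 := hVS p.1 q.2
      have h2 := dtri p.1 x q.2
      have h3 := dtri x y q.2
      rw [hyval, hxval]; linarith
    · have := hx_ge hx
      rw [hyval]; linarith
  · have hyle := hy_le hy
    by_cases hx : ∃ p ∈ M, x = p.2
    · obtain ⟨p, hp, hxe⟩ := hx
      have hxval : h x = g x - v / 3 := by have := (hM4 p hp).2; rw [← hxe] at this; exact this
      have hpv : g x - g p.1 > (G.dist p.1 x : ℝ) + 2 * v / 3 := by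
        have := hviol p hp; rw [← hxe] at this; exact this
      have hgap : g y - g x < (G.dist x y : ℝ) + v / 3 := by
        have h1 := hVS p.1 y
        have h2 := dtri p.1 x y
        linarith
      rw [hxval]; linarith
    · have hxge := hx_ge hx
      by_cases hbig : g y - g x > (G.dist x y : ℝ) + 2 * v / 3
      · -- (x,y) is a violating edge, apply maximality
        have hedge : violEdge G g (2 * v / 3) x y := by
          constructor
        
          · unfold violationScore
            have habs : |g x - g y| = g y - g x := by
              rw [abs_sub_comm]; exact abs_of_pos (by linarith)
            rw [habs]
            exact lt_max_of_lt_left (by linarith)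
          · linarith
        obtain ⟨p, hp, hcase⟩ := hM3 x y hedge
        rcases hcase with hc | hc | hc | hc
        · have hxval : h x = g x + v / 3 := by
            have := (hM4 p hp).1; rw [← hc] at this; exact this
          have := hVS x y
          rw [hxval]; linarith
        · exact absurd ⟨p, hp, hc⟩ hx
        · exact absurd ⟨p, hp, hc⟩ hy
        · have hyval : h y = g y - v / 3 := by
            have := (hM4 p hp).2; rw [← hc] at this; exact this
          have := hVS x y
          rw [hyval]; linarith
      · linarith

/-- Iterating `v_t`-reduction steps with `v_t = r (2/3)^(t-1)` starting from
`f : V → [0,r]` keeps all violation scores of `g_t` bounded by `r (2/3)^(t-1)`;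
consequently `g_t` is `(1 + r (2/3)^(t-1))`-Lipschitz. -/
theorem reduction_steps_lipschitz {V : Type*} [Fintype V]
    (G : SimpleGraph V) (hG : G.Connected) (r : ℝ) (hr : 0 < r)
    (f : V → ℝ) (hf : ∀ x, f x ∈ Set.Icc (0 : ℝ) r)
    (g : ℕ → V → ℝ) (hg1 : g 1 = f)
    (hstep : ∀ t : ℕ, 1 ≤ t → ReductionStep G (r * (2 / 3) ^ (t - 1)) (g t) (g (t + 1))) :
    ∀ t : ℕ, 1 ≤ t → ∀ x y : V,
      violationScore G (g t) x y ≤ r * (2 / 3) ^ (t - 1) ∧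
      |g t x - g t y| ≤ (1 + r * (2 / 3) ^ (t - 1)) * (G.dist x y : ℝ) := by
  -- main invariant by induction
  have hvpos : ∀ t : ℕ, 0 < r * (2 / 3 : ℝ) ^ (t - 1) := by
    intro t; positivity
  have main : ∀ t : ℕ, 1 ≤ t → ∀ x y : V,
      g t y - g t x ≤ (G.dist x y : ℝ) + r * (2 / 3) ^ (t - 1) := by
    intro t
    induction t with
    | zero => omega
    | succ n ih =>
      intro _ x y
      rcases Nat.eq_or_lt_of_le (Nat.one_le_iff_ne_zero.mpr (Nat.succ_ne_zero n)) with h1 | h1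
      · -- base case t = 1
        have hn : n = 0 := by omega
        subst hn
        simp only [hg1, pow_zero, mul_one]
        have h1 := hf x
        have h2 := hf y
        simp only [Set.mem_Icc] at h1 h2
        have : (0 : ℝ) ≤ (G.dist x y : ℝ) := Nat.cast_nonneg _
        linarith
      · have hn : 1 ≤ n := by omega
        have ihn := ih hn
        have hkey := key_step G hG (hvpos n) ihn (hstep n hn)
        have heq : r * (2 / 3 : ℝ) ^ (n + 1 - 1) = 2 * (r * (2 / 3) ^ (n - 1)) / 3 := by
          have : n + 1 - 1 = (n - 1) + 1 := by omega
          rw [this, pow_succ]; ring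
        rw [heq]
        exact hkey x y
  intro t ht x y
  have h1 := main t ht x y
  have h2 := main t ht y x
  rw [SimpleGraph.dist_comm] at h2
  have habs : |g t x - g t y| ≤ (G.dist x y : ℝ) + r * (2 / 3) ^ (t - 1) := by
    rcases abs_cases (g t x - g t y) with ⟨he, _⟩ | ⟨he, _⟩ <;> rw [he] <;> linarith
  constructor
  · unfold violationScore
    rcases max_cases (|g t x - g t y| - (G.dist x y : ℝ)) 0 with ⟨he, _⟩ | ⟨he, _⟩ <;>
      rw [he] <;> [linarith; exact le_of_lt (hvpos t)]
  · by_cases hxy : x = y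
    · subst hxy; simp [SimpleGraph.dist_self]
    · have hd1 : (1 : ℝ) ≤ (G.dist x y : ℝ) := by
        exact_mod_cast hG.pos_dist_of_ne hxy
      nlinarith [le_of_lt (hvpos t)]
end

section
/- Let r > 0, f: V→[0,r], and let (g_t)_{t≥1} be any sequence of functions with g_1 = f such that for each t ≥ 1, g_{t+1} is obtained from g_t by a v_t-reduction step with v_t = r·(2/3)^{t−1}. Then for all t ≥ 1, ‖g_t − f‖₁ ≤ 2·ℓ₁(f, Lip(G)), where ‖g_t − f‖₁ = (1/|V|)·Σ_{x∈V} |g_t(x) − f(x)|. -/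
/-- The normalized `ℓ₁` distance between two functions on a finite vertex set. -/
noncomputable def l1dist {V : Type*} [Fintype V] (f g : V → ℝ) : ℝ :=
  (1 / (Fintype.card V : ℝ)) * ∑ x : V, |f x - g x|

/-- Pointwise key inequality. -/
lemma key_ineq (v a b hx hy d : ℝ) (hv : 0 < v) (hlip : |hx - hy| ≤ d)
    (hgap : b - a > d + 2 * v / 3) :
    |a + v / 3 - hx| + |b - v / 3 - hy| ≤ |a - hx| + |b - hy| := by
  have h1 : |a + v / 3 - hx| ≤ |a - hx| + v / 3 := by
    have := abs_add_le (a - hx) (v / 3)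
    have hv3 : |v / 3| = v / 3 := abs_of_pos (by linarith)
    calc |a + v / 3 - hx| = |(a - hx) + v / 3| := by ring_nf
    _ ≤ |a - hx| + |v / 3| := abs_add_le _ _
    _ = |a - hx| + v / 3 := by rw [hv3]
  have h2 : |b - v / 3 - hy| ≤ |b - hy| + v / 3 := by
    have hv3 : |(-(v / 3))| = v / 3 := by rw [abs_neg]; exact abs_of_pos (by linarith)
    calc |b - v / 3 - hy| = |(b - hy) + (-(v / 3))| := by ring_nf
    _ ≤ |b - hy| + |(-(v / 3))| := abs_add_le _ _
    _ = |b - hy| + v / 3 := by rw [hv3]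
  rcases le_or_gt (a + v / 3) hx with hc | hc
  · have e1 : |a + v / 3 - hx| = hx - a - v / 3 := by
      rw [abs_sub_comm, abs_of_nonneg (by linarith)]; ring
    have e2 : |a - hx| = hx - a := by rw [abs_sub_comm, abs_of_nonneg (by linarith)]
    linarith
  · have hy' : hy ≤ b - v / 3 := by
      by_contra hcon
      push_neg at hcon
      have : hy - hx ≤ |hx - hy| := by
        rw [abs_sub_comm]; exact le_abs_self _
      linarith
    have e1 : |b - v / 3 - hy| = b - v / 3 - hy := abs_of_nonneg (by linarith)
    have e2 : |b - hy| = b - hy := abs_of_nonneg (by linarith)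
    linarith

/-- One reduction step does not increase the ℓ₁ distance to a Lipschitz function. -/
lemma step_noninc {V : Type*} [Fintype V] (G : SimpleGraph V) (v : ℝ) (hv : 0 < v)
    (g h : V → ℝ) (hstep : ReductionStep G v g h)
    (ℓ : V → ℝ) (hlip : ∀ x y : V, |ℓ x - ℓ y| ≤ (G.dist x y : ℝ)) :
    ∑ x : V, |h x - ℓ x| ≤ ∑ x : V, |g x - ℓ x| := by
  classical
  obtain ⟨M, hviol, hmatch, _, hupd, hfix⟩ := hstep
  set φ : V → ℝ := fun z => |h z - ℓ z| - |g z - ℓ z| with hφ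
  have hne : ∀ p ∈ M, p.1 ≠ p.2 := fun p hp => by
    have := (hviol p hp).2; exact fun e => absurd this (by rw [e]; exact lt_irrefl _)
  have hMfin : M.Finite := Set.toFinite M
  set Mf : Finset (V × V) := hMfin.toFinset with hMf
  have hmem : ∀ p, p ∈ Mf ↔ p ∈ M := fun p => hMfin.mem_toFinset
  set A : Finset V := Mf.image Prod.fst with hA
  set B : Finset V := Mf.image Prod.snd with hB
  have hsum : ∑ x : V, φ x ≤ 0 := by
    have hzero : ∀ z ∈ (Finset.univ : Finset V), z ∉ A ∪ B → φ z = 0 := by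
      intro z _ hz
      have : ∀ p ∈ M, z ≠ p.1 ∧ z ≠ p.2 := by
        intro p hp
        constructor
        · intro e; exact hz (Finset.mem_union_left _ (Finset.mem_image.2 ⟨p, (hmem p).2 hp, e.symm⟩))
        · intro e; exact hz (Finset.mem_union_right _ (Finset.mem_image.2 ⟨p, (hmem p).2 hp, e.symm⟩))
      simp [hφ, hfix z this]
    have hrestrict : ∑ x : V, φ x = ∑ x ∈ A ∪ B, φ x :=
      (Finset.sum_subset (Finset.subset_univ _) hzero).symm
    have hdisj : Disjoint A B := by
      rw [Finset.disjoint_left]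
      intro z hzA hzB
      obtain ⟨p, hp, hp1⟩ := Finset.mem_image.1 hzA
      obtain ⟨q, hq, hq2⟩ := Finset.mem_image.1 hzB
      have hpM := (hmem p).1 hp
      have hqM := (hmem q).1 hq
      by_cases hpq : p = q
      · exact hne p hpM (by rw [hpq]; rw [hpq] at hp1; rw [hp1, hq2])
      · exact (hmatch p hpM q hqM hpq).2.1 (by rw [hp1, hq2])
    have hinjA : ∀ p ∈ Mf, ∀ q ∈ Mf, p.1 = q.1 → p = q := by
      intro p hp q hq e
      by_contra hpq
      exact (hmatch p ((hmem p).1 hp) q ((hmem q).1 hq) hpq).1 e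
    have hinjB : ∀ p ∈ Mf, ∀ q ∈ Mf, p.2 = q.2 → p = q := by
      intro p hp q hq e
      by_contra hpq
      exact (hmatch p ((hmem p).1 hp) q ((hmem q).1 hq) hpq).2.2.2 e
    have hsumA : ∑ x ∈ A, φ x = ∑ p ∈ Mf, φ p.1 := Finset.sum_image hinjA
    have hsumB : ∑ x ∈ B, φ x = ∑ p ∈ Mf, φ p.2 := Finset.sum_image hinjB
    rw [hrestrict, Finset.sum_union hdisj, hsumA, hsumB, ← Finset.sum_add_distrib]
    apply Finset.sum_nonpos
    intro p hp
    have hpM := (hmem p).1 hp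
    obtain ⟨hvs, hlt⟩ := hviol p hpM
    obtain ⟨e1, e2⟩ := hupd p hpM
    have hd : (0 : ℝ) ≤ (G.dist p.1 p.2 : ℝ) := Nat.cast_nonneg _
    have hgap : g p.2 - g p.1 > (G.dist p.1 p.2 : ℝ) + 2 * v / 3 := by
      have hpos : violationScore G g p.1 p.2 = |g p.1 - g p.2| - (G.dist p.1 p.2 : ℝ) := by
        have : (2 * v / 3 : ℝ) > 0 := by linarith
        rcases max_cases (|g p.1 - g p.2| - (G.dist p.1 p.2 : ℝ)) (0 : ℝ) with ⟨e, _⟩ | ⟨e, _⟩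
        · exact e
        · exfalso; rw [violationScore, e] at hvs; linarith
      rw [violationScore] at hvs
      rw [← violationScore, hpos] at hvs
      have : |g p.1 - g p.2| = g p.2 - g p.1 := by
        rw [abs_sub_comm]; exact abs_of_pos (by linarith)
      linarith
    have key := key_ineq v (g p.1) (g p.2) (ℓ p.1) (ℓ p.2) ((G.dist p.1 p.2 : ℝ)) hv
      (hlip p.1 p.2) hgap
    simp only [hφ]
    rw [e1, e2]
    linarith
  have : ∑ x : V, (|h x - ℓ x| - |g x - ℓ x|) ≤ 0 := hsum
  rw [Finset.sum_sub_distrib] at this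
  linarith

/-- Iterating `v_t`-reduction steps with `v_t = r (2/3)^(t-1)` starting from
`f : V → [0,r]` keeps each iterate `g_t` within `ℓ₁`-distance twice the `ℓ₁`-distance
from `f` to the class of Lipschitz functions. -/
theorem reduction_steps_l1_close {V : Type*} [Fintype V]
    (G : SimpleGraph V) (hG : G.Connected) (r : ℝ) (hr : 0 < r)
    (f : V → ℝ) (hf : ∀ x, f x ∈ Set.Icc (0 : ℝ) r)
    (g : ℕ → V → ℝ) (hg1 : g 1 = f)
    (hstep : ∀ t : ℕ, 1 ≤ t → ReductionStep G (r * (2 / 3) ^ (t - 1)) (g t) (g (t + 1))) :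
    ∀ t : ℕ, 1 ≤ t →
      l1dist (g t) f ≤
        2 * sInf {c : ℝ | ∃ h : V → ℝ,
          (∀ x y : V, |h x - h y| ≤ (G.dist x y : ℝ)) ∧ c = l1dist f h} := by
  classical
  intro t ht
  set S := {c : ℝ | ∃ h : V → ℝ,
      (∀ x y : V, |h x - h y| ≤ (G.dist x y : ℝ)) ∧ c = l1dist f h} with hS
  have hSne : S.Nonempty := ⟨l1dist f (fun _ => 0), fun _ => 0, fun x y => by
    simp [Nat.cast_nonneg], rfl⟩
  -- main bound: for any Lipschitz ℓ, the sums are controlled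
  have hmain : ∀ ℓ : V → ℝ, (∀ x y : V, |ℓ x - ℓ y| ≤ (G.dist x y : ℝ)) →
      ∑ x : V, |g t x - ℓ x| ≤ ∑ x : V, |f x - ℓ x| := by
    intro ℓ hlip
    induction t, ht using Nat.le_induction with
    | base => rw [hg1]
    | succ n hn ih =>
      have hv : (0 : ℝ) < r * (2 / 3) ^ (n - 1) := by positivity
      have := step_noninc G _ hv (g n) (g (n + 1)) (hstep n hn) ℓ hlip
      linarith
  have hbound : ∀ c ∈ S, l1dist (g t) f / 2 ≤ c := by
    rintro c ⟨ℓ, hlip, rfl⟩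
    have hcard : (0 : ℝ) ≤ 1 / (Fintype.card V : ℝ) := by positivity
    have htri : ∑ x : V, |g t x - f x| ≤ ∑ x : V, |g t x - ℓ x| + ∑ x : V, |f x - ℓ x| := by
      rw [← Finset.sum_add_distrib]
      apply Finset.sum_le_sum
      intro x _
      calc |g t x - f x| = |(g t x - ℓ x) + (ℓ x - f x)| := by congr 1; ring
      _ ≤ |g t x - ℓ x| + |ℓ x - f x| := abs_add_le _ _
      _ = |g t x - ℓ x| + |f x - ℓ x| := by rw [abs_sub_comm (ℓ x) (f x)]
    have h2 : ∑ x : V, |g t x - f x| ≤ 2 * ∑ x : V, |f x - ℓ x| := by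
      have := hmain ℓ hlip
      linarith
    have : l1dist (g t) f ≤ 2 * l1dist f ℓ := by
      unfold l1dist
      calc (1 / (Fintype.card V : ℝ)) * ∑ x : V, |g t x - f x|
          ≤ (1 / (Fintype.card V : ℝ)) * (2 * ∑ x : V, |f x - ℓ x|) :=
            mul_le_mul_of_nonneg_left h2 hcard
      _ = 2 * ((1 / (Fintype.card V : ℝ)) * ∑ x : V, |f x - ℓ x|) := by ring
    linarith
  have := le_csInf hSne hbound
  linarith
end

section
/- Let r > 0, ε > 0, f: V→[0,r], and let (g_t)_{t≥1} be any sequence of functions with g_1 = f such that for each t ≥ 1, g_{t+1} is obtained from g_t by a v_t-reduction step with v_t = r·(2/3)^{t−1}. Then for every t ≥ 1 with r·(2/3)^{t−1} ≤ ε, the function g_t is (1+ε)-Lipschitz and ‖g_t − f‖₁ ≤ 2·ℓ₁(f, Lip(G)), where ‖g_t − f‖₁ = (1/|V|)·Σ_{x∈V} |g_t(x) − f(x)|. -/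
/-- Unfolding a violation edge, for a nonnegative threshold. -/
lemma violEdge_spec {V : Type*} {G : SimpleGraph V} {g : V → ℝ} {τ : ℝ} (hτ : 0 ≤ τ)
    {x y : V} (h : violEdge G g τ x y) :
    (G.dist x y : ℝ) + τ < g y - g x := by
  obtain ⟨h1, h2⟩ := h
  have habs : |g x - g y| = g y - g x := by
    rw [abs_sub_comm]; exact abs_of_nonneg (by linarith)
  unfold violationScore at h1
  rw [habs] at h1
  rcases lt_max_iff.mp h1 with hc | hc
  · linarith
  · linarith

/-- A reduction step shrinks the maximal violation from `v` to `2v/3`. -/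
lemma reduction_lip {V : Type*} (G : SimpleGraph V) (hG : G.Connected)
    {v : ℝ} (hv : 0 < v) {g h : V → ℝ} (hstep : ReductionStep G v g h)
    (hg : ∀ x y : V, g y - g x ≤ (G.dist x y : ℝ) + v) :
    ∀ x y : V, h y - h x ≤ (G.dist x y : ℝ) + 2 * v / 3 := by
  obtain ⟨M, hE, hdisj, hmax, hval, hfix⟩ := hstep
  have hτ : (0:ℝ) ≤ 2 * v / 3 := by linarith
  have down : ∀ x : V, (∃ p ∈ M, x = p.1 ∨ x = p.2) →
      ∃ w, g w ≤ h x - (G.dist x w : ℝ) - v / 3 := by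
    rintro x ⟨p, hp, hx | hx⟩
    · subst hx
      refine ⟨p.1, ?_⟩
      rw [(hval p hp).1, SimpleGraph.dist_self]
      push_cast
      linarith
    · subst hx
      refine ⟨p.1, ?_⟩
      have hviol := violEdge_spec hτ (hE p hp)
      have h2 := (hval p hp).2
      rw [SimpleGraph.dist_comm]
      linarith
  have up : ∀ y : V, (∃ p ∈ M, y = p.1 ∨ y = p.2) →
      ∃ u, h y + (G.dist y u : ℝ) + v / 3 ≤ g u := by
    rintro y ⟨p, hp, hy | hy⟩
    · subst hy
      refine ⟨p.2, ?_⟩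
      have hviol := violEdge_spec hτ (hE p hp)
      rw [(hval p hp).1]
      linarith
    · subst hy
      refine ⟨p.2, ?_⟩
      rw [(hval p hp).2, SimpleGraph.dist_self]
      push_cast
      linarith
  intro x y
  by_cases hx : ∃ p ∈ M, x = p.1 ∨ x = p.2
  · obtain ⟨w, hw⟩ := down x hx
    by_cases hy : ∃ p ∈ M, y = p.1 ∨ y = p.2
    · obtain ⟨u, hu⟩ := up y hy
      have htri : (G.dist w u : ℝ) ≤ G.dist w x + G.dist x y + G.dist y u := by
        have t1 : G.dist w u ≤ G.dist w y + G.dist y u := hG.dist_triangle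
        have t2 : G.dist w y ≤ G.dist w x + G.dist x y := hG.dist_triangle
        exact_mod_cast le_trans t1 (by omega)
      have hgwu := hg w u
      have hdc : (G.dist x w : ℝ) = G.dist w x := by rw [SimpleGraph.dist_comm]
      rw [hdc] at hw
      linarith
    · have hyfix : h y = g y := by
        apply hfix
        intro p hp
        constructor
        · intro e; exact hy ⟨p, hp, Or.inl e⟩
        · intro e; exact hy ⟨p, hp, Or.inr e⟩
      have htri : (G.dist w y : ℝ) ≤ G.dist w x + G.dist x y := by
        exact_mod_cast hG.dist_triangle
      have hgwy := hg w y
      have hdc : (G.dist x w : ℝ) = G.dist w x := by rw [SimpleGraph.dist_comm]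
      rw [hdc] at hw
      linarith
  · have hxfix : h x = g x := by
      apply hfix
      intro p hp
      constructor
      · intro e; exact hx ⟨p, hp, Or.inl e⟩
      · intro e; exact hx ⟨p, hp, Or.inr e⟩
    by_cases hy : ∃ p ∈ M, y = p.1 ∨ y = p.2
    · obtain ⟨u, hu⟩ := up y hy
      have htri : (G.dist x u : ℝ) ≤ G.dist x y + G.dist y u := by
        exact_mod_cast hG.dist_triangle
      have hgxu := hg x u
      linarith
    · have hyfix : h y = g y := by
        apply hfix
        intro p hp
        constructor
        · intro e; exact hy ⟨p, hp, Or.inl e⟩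
        · intro e; exact hy ⟨p, hp, Or.inr e⟩
      by_contra hcon
      push_neg at hcon
      have hgd : (G.dist x y : ℝ) + 2 * v / 3 < g y - g x := by
        rw [hxfix, hyfix] at hcon; linarith
      have hdist0 : (0:ℝ) ≤ (G.dist x y : ℝ) := by positivity
      have hviol : violEdge G g (2 * v / 3) x y := by
        constructor
        · unfold violationScore
          have habs : |g x - g y| = g y - g x := by
            rw [abs_sub_comm]; exact abs_of_nonneg (by linarith)
          rw [habs]
          exact lt_max_iff.mpr (Or.inl (by linarith))
        · linarith
      obtain ⟨p, hp, hc⟩ := hmax x y hviol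
      rcases hc with e | e | e | e
      · exact hx ⟨p, hp, Or.inl e⟩
      · exact hx ⟨p, hp, Or.inr e⟩
      · exact hy ⟨p, hp, Or.inl e⟩
      · exact hy ⟨p, hp, Or.inr e⟩

/-- A reduction step does not increase the `ℓ₁` distance to a Lipschitz function. -/
lemma reduction_l1 {V : Type*} [Fintype V] (G : SimpleGraph V)
    {v : ℝ} (hv : 0 < v) {g h : V → ℝ} (hstep : ReductionStep G v g h)
    (L : V → ℝ) (hLip : ∀ x y : V, |L x - L y| ≤ (G.dist x y : ℝ)) :
    ∑ x : V, |h x - L x| ≤ ∑ x : V, |g x - L x| := by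
  classical
  obtain ⟨M, hE, hdisj, hmax, hval, hfix⟩ := hstep
  have hτ : (0:ℝ) ≤ 2 * v / 3 := by linarith
  have hne : ∀ p ∈ M, p.1 ≠ p.2 := by
    intro p hp e
    have := (hE p hp).2
    rw [e] at this
    exact lt_irrefl _ this
  have h11 : ∀ p ∈ M, ∀ q ∈ M, p.1 = q.1 → p = q := by
    intro p hp q hq e
    by_contra hpq
    exact (hdisj p hp q hq hpq).1 e
  have h22 : ∀ p ∈ M, ∀ q ∈ M, p.2 = q.2 → p = q := by
    intro p hp q hq e
    by_contra hpq
    exact (hdisj p hp q hq hpq).2.2.2 e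
  have h12 : ∀ p ∈ M, ∀ q ∈ M, p.1 ≠ q.2 := by
    intro p hp q hq e
    by_cases hpq : p = q
    · exact hne p hp (hpq ▸ e)
    · exact (hdisj p hp q hq hpq).2.1 e
  set σ : V → V := fun x =>
    if h1 : ∃ p, p ∈ M ∧ x = p.1 then h1.choose.2
    else if h2 : ∃ p, p ∈ M ∧ x = p.2 then h2.choose.1
    else x with hσ
  have σ1 : ∀ p ∈ M, σ p.1 = p.2 := by
    intro p hp
    have h1 : ∃ q, q ∈ M ∧ p.1 = q.1 := ⟨p, hp, rfl⟩
    have : σ p.1 = h1.choose.2 := dif_pos h1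
    rw [this]
    obtain ⟨hq, he⟩ := h1.choose_spec
    exact congrArg Prod.snd (h11 p hp _ hq he).symm
  have σ2 : ∀ p ∈ M, σ p.2 = p.1 := by
    intro p hp
    have hn1 : ¬ ∃ q, q ∈ M ∧ p.2 = q.1 := by
      rintro ⟨q, hq, e⟩
      exact h12 q hq p hp e.symm
    have h2 : ∃ q, q ∈ M ∧ p.2 = q.2 := ⟨p, hp, rfl⟩
    have : σ p.2 = h2.choose.1 := by
      show (if h1 : ∃ q, q ∈ M ∧ p.2 = q.1 then h1.choose.2
        else if h2 : ∃ q, q ∈ M ∧ p.2 = q.2 then h2.choose.1 else p.2) = h2.choose.1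
      rw [dif_neg hn1, dif_pos h2]
    rw [this]
    obtain ⟨hq, he⟩ := h2.choose_spec
    exact congrArg Prod.fst (h22 p hp _ hq he).symm
  have σfix : ∀ x : V, (∀ p ∈ M, x ≠ p.1 ∧ x ≠ p.2) → σ x = x := by
    intro x hx
    have hn1 : ¬ ∃ q, q ∈ M ∧ x = q.1 := by
      rintro ⟨q, hq, e⟩; exact (hx q hq).1 e
    have hn2 : ¬ ∃ q, q ∈ M ∧ x = q.2 := by
      rintro ⟨q, hq, e⟩; exact (hx q hq).2 e
    show (if h1 : ∃ q, q ∈ M ∧ x = q.1 then h1.choose.2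
      else if h2 : ∃ q, q ∈ M ∧ x = q.2 then h2.choose.1 else x) = x
    rw [dif_neg hn1, dif_neg hn2]
  have hinv : Function.Involutive σ := by
    intro x
    by_cases h1 : ∃ p, p ∈ M ∧ x = p.1
    · obtain ⟨p, hp, rfl⟩ := h1
      rw [σ1 p hp, σ2 p hp]
    · by_cases h2 : ∃ p, p ∈ M ∧ x = p.2
      · obtain ⟨p, hp, rfl⟩ := h2
        rw [σ2 p hp, σ1 p hp]
      · have hx : ∀ p ∈ M, x ≠ p.1 ∧ x ≠ p.2 := by
          intro p hp
          exact ⟨fun e => h1 ⟨p, hp, e⟩, fun e => h2 ⟨p, hp, e⟩⟩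
        rw [σfix x hx, σfix x hx]
  set d : V → ℝ := fun x => |h x - L x| - |g x - L x| with hd
  have pairkey : ∀ p ∈ M, d p.1 + d p.2 ≤ 0 := by
    intro p hp
    have hviol := violEdge_spec hτ (hE p hp)
    have hL1 := hLip p.1 p.2
    have hL2 : L p.2 - L p.1 ≤ (G.dist p.1 p.2 : ℝ) := by
      have := abs_le.mp (abs_abs (L p.1 - L p.2) ▸ hL1)
      rcases abs_cases (L p.1 - L p.2) with ⟨e, _⟩ | ⟨e, _⟩ <;> linarith
    obtain ⟨hv1, hv2⟩ := hval p hp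
    set a := g p.1 - L p.1 with ha
    set b := g p.2 - L p.2 with hb
    have hba : 2 * v / 3 < b - a := by
      have : (G.dist p.1 p.2 : ℝ) + 2 * v / 3 < g p.2 - g p.1 := hviol
      simp only [ha, hb]
      linarith
    have e1 : d p.1 = |a + v / 3| - |a| := by
      simp only [hd, ha, hv1]
      ring_nf
    have e2 : d p.2 = |b - v / 3| - |b| := by
      simp only [hd, hb, hv2]
      ring_nf
    rw [e1, e2]
    rcases abs_cases (a + v / 3) with ⟨f1, s1⟩ | ⟨f1, s1⟩ <;>
      rcases abs_cases (b - v / 3) with ⟨f2, s2⟩ | ⟨f2, s2⟩ <;>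
      rcases abs_cases a with ⟨f3, s3⟩ | ⟨f3, s3⟩ <;>
      rcases abs_cases b with ⟨f4, s4⟩ | ⟨f4, s4⟩ <;>
      rw [f1, f2, f3, f4] <;> linarith
  have key : ∀ x : V, d x + d (σ x) ≤ 0 := by
    intro x
    by_cases h1 : ∃ p, p ∈ M ∧ x = p.1
    · obtain ⟨p, hp, rfl⟩ := h1
      rw [σ1 p hp]
      exact pairkey p hp
    · by_cases h2 : ∃ p, p ∈ M ∧ x = p.2
      · obtain ⟨p, hp, rfl⟩ := h2
        rw [σ2 p hp]
        have := pairkey p hp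
        linarith
      · have hx : ∀ p ∈ M, x ≠ p.1 ∧ x ≠ p.2 := by
          intro p hp
          exact ⟨fun e => h1 ⟨p, hp, e⟩, fun e => h2 ⟨p, hp, e⟩⟩
        rw [σfix x hx]
        have : h x = g x := hfix x hx
        simp only [hd, this]
        linarith
  have hsum : ∑ x : V, d x ≤ 0 := by
    have hre : ∑ x : V, d (σ x) = ∑ x : V, d x :=
      Equiv.sum_comp (Function.Involutive.toPerm σ hinv) d
    have h2 : ∑ x : V, (d x + d (σ x)) ≤ 0 := by
      calc ∑ x : V, (d x + d (σ x)) ≤ ∑ _x : V, (0:ℝ) :=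
            Finset.sum_le_sum (fun x _ => key x)
        _ = 0 := by simp
    rw [Finset.sum_add_distrib, hre] at h2
    linarith
  simp only [hd] at hsum
  rw [Finset.sum_sub_distrib] at hsum
  linarith

/-- Correctness of the global `ℓ₁` filter: once `r (2/3)^(t-1) ≤ ε`, the iterate `g_t`
is `(1+ε)`-Lipschitz and within `ℓ₁`-distance twice the `ℓ₁`-distance from `f` to the
class of Lipschitz functions. -/
theorem global_filter_correct {V : Type*} [Fintype V]
    (G : SimpleGraph V) (hG : G.Connected) (r ε : ℝ) (hr : 0 < r) (hε : 0 < ε)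
    (f : V → ℝ) (hf : ∀ x, f x ∈ Set.Icc (0 : ℝ) r)
    (g : ℕ → V → ℝ) (hg1 : g 1 = f)
    (hstep : ∀ t : ℕ, 1 ≤ t → ReductionStep G (r * (2 / 3) ^ (t - 1)) (g t) (g (t + 1))) :
    ∀ t : ℕ, 1 ≤ t → r * (2 / 3) ^ (t - 1) ≤ ε →
      (∀ x y : V, |g t x - g t y| ≤ (1 + ε) * (G.dist x y : ℝ)) ∧
      l1dist (g t) f ≤
        2 * sInf {c : ℝ | ∃ h : V → ℝ,
          (∀ x y : V, |h x - h y| ≤ (G.dist x y : ℝ)) ∧ c = l1dist f h} := by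
  have hvpos : ∀ t : ℕ, (0:ℝ) < r * (2 / 3) ^ (t - 1) := by
    intro t; positivity
  -- Invariant 1: violation bound
  have inv1 : ∀ t : ℕ, 1 ≤ t → ∀ x y : V,
      |g t x - g t y| ≤ (G.dist x y : ℝ) + r * (2 / 3) ^ (t - 1) := by
    intro t ht
    induction t, ht using Nat.le_induction with
    | base =>
      intro x y
      rw [hg1]
      have hx := hf x
      have hy := hf y
      simp only [Set.mem_Icc] at hx hy
      have hd : (0:ℝ) ≤ (G.dist x y : ℝ) := by positivity
      simp only [Nat.sub_self, pow_zero, mul_one]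
      rcases abs_cases (f x - f y) with ⟨e, _⟩ | ⟨e, _⟩ <;> rw [e] <;> linarith
    | succ t ht ih =>
      have honesided : ∀ x y : V, g t y - g t x ≤ (G.dist x y : ℝ) + r * (2 / 3) ^ (t - 1) := by
        intro x y
        have := ih x y
        rcases abs_cases (g t x - g t y) with ⟨e, _⟩ | ⟨e, _⟩ <;> linarith
      have hred := reduction_lip G hG (hvpos t) (hstep t ht) honesided
      have hpow : 2 * (r * (2 / 3) ^ (t - 1)) / 3 = r * (2 / 3) ^ (t + 1 - 1) := by
        have : t + 1 - 1 = (t - 1) + 1 := by omega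
        rw [this, pow_succ]
        ring
      intro x y
      have h1 := hred x y
      have h2 := hred y x
      rw [hpow] at h1 h2
      have hdc : (G.dist y x : ℝ) = G.dist x y := by rw [SimpleGraph.dist_comm]
      rw [hdc] at h2
      rcases abs_cases (g (t+1) x - g (t+1) y) with ⟨e, _⟩ | ⟨e, _⟩ <;> rw [e] <;> linarith
  -- Invariant 2: ℓ₁ distance to Lipschitz functions does not increase
  have inv2 : ∀ (L : V → ℝ), (∀ x y : V, |L x - L y| ≤ (G.dist x y : ℝ)) →
      ∀ t : ℕ, 1 ≤ t → ∑ x : V, |g t x - L x| ≤ ∑ x : V, |f x - L x| := by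
    intro L hLip t ht
    induction t, ht using Nat.le_induction with
    | base => rw [hg1]
    | succ t ht ih =>
      exact le_trans (reduction_l1 G (hvpos t) (hstep t ht) L hLip) ih
  intro t ht hε'
  constructor
  · intro x y
    by_cases hxy : x = y
    · subst hxy
      simp [SimpleGraph.dist_self]
    · have hd1 : 1 ≤ (G.dist x y : ℝ) := by
        exact_mod_cast hG.pos_dist_of_ne hxy
      have := inv1 t ht x y
      nlinarith
  · set S := {c : ℝ | ∃ h : V → ℝ,
      (∀ x y : V, |h x - h y| ≤ (G.dist x y : ℝ)) ∧ c = l1dist f h} with hS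
    have hSne : S.Nonempty := by
      refine ⟨l1dist f (fun _ => 0), fun _ => 0, fun x y => ?_, rfl⟩
      have h0 : |(0:ℝ) - 0| = 0 := by norm_num
      rw [h0]
      positivity
    have hlb : ∀ c ∈ S, l1dist (g t) f / 2 ≤ c := by
      rintro c ⟨L, hLip, rfl⟩
      have h1 := inv2 L hLip t ht
      have h2 : ∑ x : V, |g t x - f x| ≤ 2 * ∑ x : V, |f x - L x| := by
        have h3 : ∀ x : V, |g t x - f x| ≤ |g t x - L x| + |f x - L x| := by
          intro x
          have := abs_sub_le (g t x) (L x) (f x)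
          have hc : |L x - f x| = |f x - L x| := abs_sub_comm _ _
          linarith [abs_sub_le (g t x) (L x) (f x), hc ▸ this]
        calc ∑ x : V, |g t x - f x| ≤ ∑ x : V, (|g t x - L x| + |f x - L x|) :=
              Finset.sum_le_sum (fun x _ => h3 x)
          _ = (∑ x : V, |g t x - L x|) + ∑ x : V, |f x - L x| := Finset.sum_add_distrib
          _ ≤ 2 * ∑ x : V, |f x - L x| := by linarith
      unfold l1dist
      have hcard : (0:ℝ) ≤ 1 / (Fintype.card V : ℝ) := by positivity
      nlinarith [mul_le_mul_of_nonneg_left h2 hcard]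
    have := le_csInf hSne hlb
    linarith
end
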